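/- In the operator realization H = ∂_t, D = 2(t+4z)(e^{4z∂_t}−1)/(4z) + x∂_x + 1/2, P = ∂_x, K = −(t+4z)e^{4z∂_t}∂_x − mx, M = m acting on smooth functions of (x,t), the relations [D,P] = −P, [D,K] = K, [K,P] = M = m, and [K,H] = e^{4z∂_t}P hold. -/

import Mathlib

noncomputable section

def pdx (F : ℝ × ℝ → ℝ) : ℝ × ℝ → ℝ := fun p => fderiv ℝ F p (1, 0)
def pdt (F : ℝ × ℝ → ℝ) : ℝ × ℝ → ℝ := fun p => fderiv ℝ F p (0, 1)

lemma contDiff_pdx {F : ℝ × ℝ → ℝ} (hF : ContDiff ℝ (⊤ : ℕ∞) F) : ContDiff ℝ (⊤ : ℕ∞) (pdx F) :=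
  (hF.fderiv_right (by simp)).clm_apply contDiff_const

lemma contDiff_pdt {F : ℝ × ℝ → ℝ} (hF : ContDiff ℝ (⊤ : ℕ∞) F) : ContDiff ℝ (⊤ : ℕ∞) (pdt F) :=
  (hF.fderiv_right (by simp)).clm_apply contDiff_const

lemma hasDerivAt_pdx {F : ℝ × ℝ → ℝ} (hF : ContDiff ℝ (⊤ : ℕ∞) F) (x t : ℝ) :
    HasDerivAt (fun y => F (y, t)) (pdx F (x, t)) x :=
  ((hF.differentiable (by simp) (x, t)).hasFDerivAt).comp_hasDerivAt x
    ((hasDerivAt_id x).prodMk (hasDerivAt_const x t))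

lemma hasDerivAt_pdt {F : ℝ × ℝ → ℝ} (hF : ContDiff ℝ (⊤ : ℕ∞) F) (x t : ℝ) :
    HasDerivAt (fun s => F (x, s)) (pdt F (x, t)) t :=
  ((hF.differentiable (by simp) (x, t)).hasFDerivAt).comp_hasDerivAt t
    ((hasDerivAt_const t x).prodMk (hasDerivAt_id t))

lemma hasDerivAt_pdt_shift {F : ℝ × ℝ → ℝ} (hF : ContDiff ℝ (⊤ : ℕ∞) F) (x t a : ℝ) :
    HasDerivAt (fun s => F (x, s + a)) (pdt F (x, t + a)) t :=
  ((hF.differentiable (by simp) (x, t + a)).hasFDerivAt).comp_hasDerivAt t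
    ((hasDerivAt_const t x).prodMk ((hasDerivAt_id t).add_const a))

lemma pd_pd {F : ℝ × ℝ → ℝ} (hF : ContDiff ℝ (⊤ : ℕ∞) F) (v w : ℝ × ℝ) (p : ℝ × ℝ) :
    fderiv ℝ (fun q => fderiv ℝ F q w) p v = fderiv ℝ (fderiv ℝ F) p v w := by
  rw [fderiv_clm_apply ((hF.fderiv_right (m := (⊤ : ℕ∞)) (by simp)).differentiable (by simp) p)
    (differentiableAt_const w)]
  simp

lemma pdx_pdt {F : ℝ × ℝ → ℝ} (hF : ContDiff ℝ (⊤ : ℕ∞) F) (p : ℝ × ℝ) :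
    pdx (pdt F) p = pdt (pdx F) p := by
  have hs : IsSymmSndFDerivAt ℝ F p := hF.contDiffAt.isSymmSndFDerivAt (by rw [minSmoothness_of_isRCLikeNormedField]; exact WithTop.coe_le_coe.mpr (le_top : (2 : ℕ∞) ≤ ⊤))
  show fderiv ℝ (fun q => fderiv ℝ F q (0,1)) p (1,0) = fderiv ℝ (fun q => fderiv ℝ F q (1,0)) p (0,1)
  rw [pd_pd hF, pd_pd hF, hs (1,0) (0,1)]

/-- Time shift operator `(e^{a∂_t}φ)(x,t) = φ(x,t+a)`. -/
def St (a : ℝ) (φ : ℝ → ℝ → ℝ) : ℝ → ℝ → ℝ := fun x t => φ x (t + a)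

/-- `H = ∂_t`. -/
def Ht (φ : ℝ → ℝ → ℝ) : ℝ → ℝ → ℝ := fun x t => deriv (φ x) t

/-- `P = ∂_x`. -/
def Px (φ : ℝ → ℝ → ℝ) : ℝ → ℝ → ℝ := fun x t => deriv (fun y => φ y t) x

/-- Deformed dilation `D = 2(t+4z)(e^{4z∂_t}−1)/(4z) + x∂_x + 1/2`. -/
def Dop (z : ℝ) (φ : ℝ → ℝ → ℝ) : ℝ → ℝ → ℝ :=
  fun x t => 2 * (t + 4 * z) * ((φ x (t + 4 * z) - φ x t) / (4 * z))
    + x * Px φ x t + (1/2) * φ x t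

/-- Deformed boost `K = −(t+4z)e^{4z∂_t}∂_x − mx`. -/
def Kop (z m : ℝ) (φ : ℝ → ℝ → ℝ) : ℝ → ℝ → ℝ :=
  fun x t => -(t + 4 * z) * Px φ x (t + 4 * z) - m * x * φ x t

theorem time_deformed_schrodinger_relations (z m : ℝ) (hz : z ≠ 0)
    (φ : ℝ → ℝ → ℝ) (hφ : ContDiff ℝ (⊤ : ℕ∞) (fun p : ℝ × ℝ => φ p.1 p.2)) :
    (∀ x t, Dop z (Px φ) x t - Px (Dop z φ) x t = -(Px φ x t)) ∧
    (∀ x t, Dop z (Kop z m φ) x t - Kop z m (Dop z φ) x t = Kop z m φ x t) ∧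
    (∀ x t, Kop z m (Px φ) x t - Px (Kop z m φ) x t = m * φ x t) ∧
    (∀ x t, Kop z m (Ht φ) x t - Ht (Kop z m φ) x t = Px φ x (t + 4 * z)) := by
  set F : ℝ × ℝ → ℝ := fun p : ℝ × ℝ => φ p.1 p.2 with hFdef
  have hPx : ∀ x t, Px φ x t = pdx F (x, t) := fun x t => (hasDerivAt_pdx hφ x t).deriv
  have hHt : ∀ x t, Ht φ x t = pdt F (x, t) := fun x t => (hasDerivAt_pdt hφ x t).deriv
  have hDPx : ∀ x t, HasDerivAt (fun y => Px φ y t) (pdx (pdx F) (x, t)) x := fun x t =>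
    (hasDerivAt_pdx (contDiff_pdx hφ) x t).congr_of_eventuallyEq
      (Filter.Eventually.of_forall fun y => hPx y t)
  have hPxPx : ∀ x t, Px (Px φ) x t = pdx (pdx F) (x, t) := fun x t => (hDPx x t).deriv
  have hDHt : ∀ x t, HasDerivAt (fun y => Ht φ y t) (pdx (pdt F) (x, t)) x := fun x t =>
    (hasDerivAt_pdx (contDiff_pdt hφ) x t).congr_of_eventuallyEq
      (Filter.Eventually.of_forall fun y => hHt y t)
  have hPxHt : ∀ x t, Px (Ht φ) x t = pdt (pdx F) (x, t) := fun x t =>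
    ((hDHt x t).deriv).trans (pdx_pdt hφ (x, t))
  have hDsh : ∀ x t, HasDerivAt (fun s => Px φ x (s + 4 * z)) (pdt (pdx F) (x, t + 4 * z)) t :=
    fun x t => (hasDerivAt_pdt_shift (contDiff_pdx hφ) x t (4 * z)).congr_of_eventuallyEq
      (Filter.Eventually.of_forall fun s => hPx x (s + 4 * z))
  have hPxD : ∀ x t, Px (Dop z φ) x t =
      2 * (t + 4 * z) * ((pdx F (x, t + 4 * z) - pdx F (x, t)) / (4 * z))
        + (1 * pdx F (x, t) + x * pdx (pdx F) (x, t)) + 1 / 2 * pdx F (x, t) := by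
    intro x t
    have H := ((((hasDerivAt_pdx hφ x (t + 4 * z)).sub (hasDerivAt_pdx hφ x t)).div_const
        (4 * z)).const_mul (2 * (t + 4 * z))).add
      ((hasDerivAt_id x).mul (hDPx x t)) |>.add ((hasDerivAt_pdx hφ x t).const_mul (1/2))
    have h2 : Px (Dop z φ) x t =
        2 * (t + 4 * z) * ((pdx F (x, t + 4 * z) - pdx F (x, t)) / (4 * z))
          + (1 * Px φ x t + x * pdx (pdx F) (x, t)) + 1 / 2 * pdx F (x, t) := H.deriv
    rw [h2, hPx]
  have hPxK : ∀ x t, Px (Kop z m φ) x t =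
      -(t + 4 * z) * pdx (pdx F) (x, t + 4 * z)
        - (m * 1 * φ x t + m * x * pdx F (x, t)) := by
    intro x t
    have H := ((hDPx x (t + 4 * z)).const_mul (-(t + 4 * z))).sub
      (((hasDerivAt_id x).const_mul m).mul (hasDerivAt_pdx hφ x t))
    exact H.deriv
  have hHtK : ∀ x t, Ht (Kop z m φ) x t =
      (-1 * pdx F (x, t + 4 * z) + -(t + 4 * z) * pdt (pdx F) (x, t + 4 * z))
        - m * x * pdt F (x, t) := by
    intro x t
    have H := ((((hasDerivAt_id t).add_const (4 * z)).neg.mul (hDsh x t)).sub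
      ((hasDerivAt_pdt hφ x t).const_mul (m * x)))
    have h2 : Ht (Kop z m φ) x t =
        (-1 * Px φ x (t + 4 * z) + -(t + 4 * z) * pdt (pdx F) (x, t + 4 * z))
          - m * x * pdt F (x, t) := H.deriv
    rw [h2, hPx]
  have hKv : ∀ x s, Kop z m φ x s = -(s + 4 * z) * pdx F (x, s + 4 * z) - m * x * φ x s := by
    intro x s
    rw [show Kop z m φ x s = -(s + 4 * z) * Px φ x (s + 4 * z) - m * x * φ x s from rfl, hPx]
  have hDv : ∀ x s, Dop z φ x s =
      2 * (s + 4 * z) * ((φ x (s + 4 * z) - φ x s) / (4 * z)) + x * pdx F (x, s)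
        + 1 / 2 * φ x s := by
    intro x s
    rw [show Dop z φ x s = 2 * (s + 4 * z) * ((φ x (s + 4 * z) - φ x s) / (4 * z))
      + x * Px φ x s + (1/2) * φ x s from rfl, hPx]
  have h4z : (4 : ℝ) * z ≠ 0 := mul_ne_zero (by norm_num) hz
  refine ⟨fun x t => ?_, fun x t => ?_, fun x t => ?_, fun x t => ?_⟩
  · rw [show Dop z (Px φ) x t = 2 * (t + 4 * z) * ((Px φ x (t + 4 * z) - Px φ x t) / (4 * z))
      + x * Px (Px φ) x t + (1/2) * Px φ x t from rfl]
    simp only [hPxD, hPxPx, hPx]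
    ring
  · rw [show Dop z (Kop z m φ) x t =
        2 * (t + 4 * z) * ((Kop z m φ x (t + 4 * z) - Kop z m φ x t) / (4 * z))
          + x * Px (Kop z m φ) x t + (1/2) * Kop z m φ x t from rfl,
      show Kop z m (Dop z φ) x t =
        -(t + 4 * z) * Px (Dop z φ) x (t + 4 * z) - m * x * Dop z φ x t from rfl]
    simp only [hPxK, hPxD, hKv, hDv, hPx]
    field_simp
    ring
  · rw [show Kop z m (Px φ) x t =
      -(t + 4 * z) * Px (Px φ) x (t + 4 * z) - m * x * Px φ x t from rfl]
    simp only [hPxK, hPxPx, hPx]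
    ring
  · rw [show Kop z m (Ht φ) x t =
      -(t + 4 * z) * Px (Ht φ) x (t + 4 * z) - m * x * Ht φ x t from rfl]
    simp only [hHtK, hPxHt, hHt, hPx]
    ring
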